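/- For SGD with exponential moving average on a scalar noisy quadratic, the expected risk of the averaged iterate satisfies E[ℓ(θ̃(t))] ≤ ((r₁^{t+1} - r₂^{t+1} - γ(1-αh)(r₁^t - r₂^t))/(r₁ - r₂))² E[ℓ(θ(0))] + (αc/(2B(2-αh))) · ((1-γ)(1+(1-αh)γ))/((1+γ)(1-(1-αh)γ)), where r₁ = 1-αh and r₂ = γ. -/

import Mathlib

/-!
Fix weights `w = (u, v)`. One step of the recursion writes `u θ(t+1) + v θ̃(t+1)` as
`u' θ(t) + v' θ̃(t)` plus a multiple of `ε(t)`, where `(u', v')` is obtained from `w` by the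
transpose of the noise-free dynamics. Since `(θ(t), θ̃(t))` is independent of the centred noise
`ε(t)`, the cross term vanishes, and `E[(u θ(t) + v θ̃(t))²]` unrolls into a deterministic multiple
of `E[θ(0)²]` plus `s²` times a finite sum of squared noise coefficients. For `w = (0, 1)` these
coefficients are explicit, and the finite sum is bounded by the full series, which is a
combination of three geometric series.
-/

open MeasureTheory ProbabilityTheory

lemma integral_add_mul_sq_of_indepFun {Ω : Type*} [MeasurableSpace Ω] {μ : Measure Ω}
    {X E : Ω → ℝ} (hX : MemLp X 2 μ) (hE : MemLp E 2 μ) (hind : IndepFun X E μ)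
    (hmean : ∫ ω, E ω ∂μ = 0) (a : ℝ) :
    ∫ ω, (X ω + a * E ω) ^ 2 ∂μ = ∫ ω, X ω ^ 2 ∂μ + a ^ 2 * ∫ ω, E ω ^ 2 ∂μ := by
  have hXE : ∫ ω, X ω * E ω ∂μ = 0 := by
    rw [hind.integral_fun_mul_eq_mul_integral hX.aestronglyMeasurable hE.aestronglyMeasurable,
      hmean, mul_zero]
  have iXX : Integrable (fun ω => X ω ^ 2) μ := hX.integrable_sq
  have iXE : Integrable (fun ω => 2 * a * (X ω * E ω)) μ := (hX.integrable_mul hE).const_mul _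
  have iEE : Integrable (fun ω => a ^ 2 * E ω ^ 2) μ := hE.integrable_sq.const_mul _
  calc ∫ ω, (X ω + a * E ω) ^ 2 ∂μ
      = ∫ ω, X ω ^ 2 + 2 * a * (X ω * E ω) + a ^ 2 * E ω ^ 2 ∂μ := by congr with ω; ring
    _ = ∫ ω, X ω ^ 2 ∂μ + a ^ 2 * ∫ ω, E ω ^ 2 ∂μ := by
      rw [integral_add (f := fun ω => X ω ^ 2 + 2 * a * (X ω * E ω)) (iXX.add iXE) iEE,
        integral_add iXX iXE, integral_const_mul, integral_const_mul, hXE, mul_zero, add_zero]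

/-- The transpose of the noise-free dynamics `(θ, θ̃) ↦ (r θ, γ θ̃ + (1 - γ) r θ)`, acting on
the weights `(u, v)` of a linear combination `u θ + v θ̃`. -/
def emaDualStep (r γ : ℝ) (w : ℝ × ℝ) : ℝ × ℝ := (r * (w.1 + (1 - γ) * w.2), γ * w.2)

lemma emaDualStep_comb {Ω : Type*} {r s γ : ℝ} {θ θavg ε : ℕ → Ω → ℝ}
    (hrecθ : ∀ t ω, θ (t + 1) ω = r * θ t ω + s * ε t ω)
    (hrecavg : ∀ t ω, θavg (t + 1) ω = γ * θavg t ω + (1 - γ) * θ (t + 1) ω)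
    (t : ℕ) (ω : Ω) (w : ℝ × ℝ) :
    w.1 * θ (t + 1) ω + w.2 * θavg (t + 1) ω
      = ((emaDualStep r γ w).1 * θ t ω + (emaDualStep r γ w).2 * θavg t ω)
        + ((w.1 + (1 - γ) * w.2) * s) * ε t ω := by
  rw [hrecavg, hrecθ, emaDualStep]
  ring

section Iterate

variable {r γ : ℝ}

lemma emaDualStep_iterate (hne : r ≠ γ) (k : ℕ) :
    (emaDualStep r γ)^[k] (0, 1) = ((1 - γ) * r * (r ^ k - γ ^ k) / (r - γ), γ ^ k) := by
  have hd : r - γ ≠ 0 := sub_ne_zero.mpr hne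
  induction k with
  | zero => simp
  | succ k ih =>
    rw [Function.iterate_succ_apply', ih, emaDualStep, Prod.mk.injEq]
    constructor
    · field_simp
      ring
    · ring

lemma emaDualStep_iterate_fst_add_snd (hne : r ≠ γ) (k : ℕ) :
    ((emaDualStep r γ)^[k] (0, 1)).1 + ((emaDualStep r γ)^[k] (0, 1)).2
      = (r ^ (k + 1) - γ ^ (k + 1) - γ * r * (r ^ k - γ ^ k)) / (r - γ) := by
  have hd : r - γ ≠ 0 := sub_ne_zero.mpr hne
  rw [emaDualStep_iterate hne]
  field_simp
  ring

lemma emaDualStep_iterate_fst_add_mul_snd (hne : r ≠ γ) (k : ℕ) :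
    ((emaDualStep r γ)^[k] (0, 1)).1 + (1 - γ) * ((emaDualStep r γ)^[k] (0, 1)).2
      = (1 - γ) * (r ^ (k + 1) - γ ^ (k + 1)) / (r - γ) := by
  have hd : r - γ ≠ 0 := sub_ne_zero.mpr hne
  rw [emaDualStep_iterate hne]
  field_simp
  ring

end Iterate

lemma hasSum_pow_succ_of_abs_lt_one {x : ℝ} (hx : |x| < 1) :
    HasSum (fun k : ℕ => x ^ (k + 1)) (x / (1 - x)) := by
  simpa only [pow_succ', div_eq_mul_inv] using (hasSum_geometric_of_abs_lt_one hx).mul_left x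

lemma hasSum_sq_ema_noise {r γ : ℝ} (hr : |r| < 1) (hγ : |γ| < 1) (hne : r ≠ γ) :
    HasSum (fun k : ℕ => ((1 - γ) * (r ^ (k + 1) - γ ^ (k + 1)) / (r - γ)) ^ 2)
      ((1 - γ) * (1 + r * γ) / ((1 - r ^ 2) * (1 + γ) * (1 - r * γ))) := by
  have hr2 : |r ^ 2| < 1 := by
    rw [abs_pow]
    exact pow_lt_one₀ (abs_nonneg r) hr two_ne_zero
  have hγ2 : |γ ^ 2| < 1 := by
    rw [abs_pow]
    exact pow_lt_one₀ (abs_nonneg γ) hγ two_ne_zero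
  have hrγ : |r * γ| < 1 := by
    rw [abs_mul]
    exact mul_lt_one_of_nonneg_of_lt_one_left (abs_nonneg r) hr hγ.le
  have hd : r - γ ≠ 0 := sub_ne_zero.mpr hne
  have h1 : 1 - r ^ 2 ≠ 0 := by linarith [abs_lt.mp hr2]
  have h3 : 1 - γ * r ≠ 0 := by linarith [abs_lt.mp hrγ, mul_comm r γ]
  have h4 : 1 + γ ≠ 0 := by linarith [abs_lt.mp hγ]
  have h5 : 1 - γ ≠ 0 := by linarith [abs_lt.mp hγ]
  have hsum := (((hasSum_pow_succ_of_abs_lt_one hr2).add (hasSum_pow_succ_of_abs_lt_one hγ2)).sub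
    ((hasSum_pow_succ_of_abs_lt_one hrγ).mul_left 2)).mul_left (((1 - γ) / (r - γ)) ^ 2)
  rw [show (1 - γ) * (1 + r * γ) / ((1 - r ^ 2) * (1 + γ) * (1 - r * γ))
      = ((1 - γ) / (r - γ)) ^ 2 * (r ^ 2 / (1 - r ^ 2) + γ ^ 2 / (1 - γ ^ 2)
        - 2 * (r * γ / (1 - r * γ))) by
    rw [show 1 - γ ^ 2 = (1 - γ) * (1 + γ) by ring]
    field_simp
    ring]
  exact hsum.congr_fun fun k => by ring

lemma integral_sq_ema_comb {Ω : Type*} [MeasurableSpace Ω] {μ : Measure Ω} {r s γ : ℝ}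
    {θ θavg ε : ℕ → Ω → ℝ}
    (hθL2 : ∀ t, MemLp (θ t) 2 μ) (havgL2 : ∀ t, MemLp (θavg t) 2 μ)
    (hεL2 : ∀ t, MemLp (ε t) 2 μ)
    (hmean : ∀ t, ∫ ω, ε t ω ∂μ = 0) (hsq : ∀ t, ∫ ω, ε t ω ^ 2 ∂μ = 1)
    (hindep : ∀ t, IndepFun (fun ω => (θ t ω, θavg t ω)) (ε t) μ)
    (havg0 : ∀ ω, θavg 0 ω = θ 0 ω)
    (hrecθ : ∀ t ω, θ (t + 1) ω = r * θ t ω + s * ε t ω)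
    (hrecavg : ∀ t ω, θavg (t + 1) ω = γ * θavg t ω + (1 - γ) * θ (t + 1) ω)
    (t : ℕ) (w : ℝ × ℝ) :
    ∫ ω, (w.1 * θ t ω + w.2 * θavg t ω) ^ 2 ∂μ
      = (((emaDualStep r γ)^[t] w).1 + ((emaDualStep r γ)^[t] w).2) ^ 2 * ∫ ω, θ 0 ω ^ 2 ∂μ
        + s ^ 2 * ∑ k ∈ Finset.range t,
          (((emaDualStep r γ)^[k] w).1 + (1 - γ) * ((emaDualStep r γ)^[k] w).2) ^ 2 := by
  induction t generalizing w with
  | zero =>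
    simp only [Function.iterate_zero, id_eq, Finset.range_zero, Finset.sum_empty, mul_zero,
      add_zero, havg0, ← integral_const_mul]
    congr with ω
    ring
  | succ t ih =>
    set w' := emaDualStep r γ w
    have hcomb : MemLp (fun ω => w'.1 * θ t ω + w'.2 * θavg t ω) 2 μ :=
      ((hθL2 t).const_mul _).add ((havgL2 t).const_mul _)
    have hind : IndepFun (fun ω => w'.1 * θ t ω + w'.2 * θavg t ω) (ε t) μ :=
      (hindep t).comp ((measurable_fst.const_mul _).add (measurable_snd.const_mul _))
        measurable_id
    have hstep : ∫ ω, (w.1 * θ (t + 1) ω + w.2 * θavg (t + 1) ω) ^ 2 ∂μ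
        = ∫ ω, (w'.1 * θ t ω + w'.2 * θavg t ω) ^ 2 ∂μ + ((w.1 + (1 - γ) * w.2) * s) ^ 2 := by
      simp_rw [emaDualStep_comb hrecθ hrecavg t _ w]
      rw [integral_add_mul_sq_of_indepFun hcomb (hεL2 t) hind (hmean t), hsq, mul_one]
    simp only [hstep, ih, Finset.sum_range_succ', Function.iterate_succ_apply,
      Function.iterate_zero_apply, w']
    ring

theorem stmt12_general {Ω : Type*} [MeasurableSpace Ω] {μ : Measure Ω}
    (α h c B γ : ℝ) (hh : 0 < h) (hc : 0 < c) (hB : 0 < B)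
    (h0 : 0 < α * h) (h2 : α * h < 2) (hγ0 : 0 ≤ γ) (hγ1 : γ < 1)
    (hγne : γ ≠ 1 - α * h)
    (θ θavg ε : ℕ → Ω → ℝ)
    (hθL2 : ∀ t, MemLp (θ t) 2 μ) (havgL2 : ∀ t, MemLp (θavg t) 2 μ)
    (hεL2 : ∀ t, MemLp (ε t) 2 μ)
    (hmean : ∀ t, ∫ ω, ε t ω ∂μ = 0) (hvar : ∀ t, variance (ε t) μ = 1)
    (hindep : ∀ t, IndepFun (fun ω => (θ t ω, θavg t ω)) (ε t) μ)
    (havg0 : ∀ ω, θavg 0 ω = θ 0 ω)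
    (hrecθ : ∀ t ω, θ (t + 1) ω = θ t ω - α * (h * θ t ω + Real.sqrt (c / B) * ε t ω))
    (hrecavg : ∀ t ω, θavg (t + 1) ω = γ * θavg t ω + (1 - γ) * θ (t + 1) ω)
    (t : ℕ) :
    ∫ ω, (1 / 2) * h * (θavg t ω) ^ 2 ∂μ
      ≤ (((1 - α * h) ^ (t + 1) - γ ^ (t + 1)
            - γ * (1 - α * h) * ((1 - α * h) ^ t - γ ^ t)) / ((1 - α * h) - γ)) ^ 2
          * ∫ ω, (1 / 2) * h * (θ 0 ω) ^ 2 ∂μ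
        + (α * c / (2 * B * (2 - α * h)))
          * ((1 - γ) * (1 + (1 - α * h) * γ) / ((1 + γ) * (1 - (1 - α * h) * γ))) := by
  set r := 1 - α * h
  have hr : |r| < 1 := abs_lt.mpr ⟨by linarith, by linarith⟩
  have hne : r ≠ γ := hγne.symm
  have hsq : ∀ t, ∫ ω, ε t ω ^ 2 ∂μ = 1 := fun t => by
    rw [← variance_of_integral_eq_zero (hεL2 t).aestronglyMeasurable.aemeasurable (hmean t),
      hvar t]
  have hmom := integral_sq_ema_comb (r := r) (s := -(α * Real.sqrt (c / B))) hθL2 havgL2 hεL2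
    hmean hsq hindep havg0 (fun t ω => by rw [hrecθ]; ring) hrecavg t (0, 1)
  simp only [emaDualStep_iterate_fst_add_snd hne, emaDualStep_iterate_fst_add_mul_snd hne,
    zero_mul, zero_add, one_mul, neg_sq, mul_pow, Real.sq_sqrt (div_pos hc hB).le] at hmom
  have hnoise := sum_le_hasSum (Finset.range t) (fun k _ => sq_nonneg _)
    (hasSum_sq_ema_noise hr (abs_lt.mpr ⟨by linarith, hγ1⟩) hne)
  have hconst : 1 / 2 * h * (α ^ 2 * (c / B))
        * ((1 - γ) * (1 + r * γ) / ((1 - r ^ 2) * (1 + γ) * (1 - r * γ)))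
      = α * c / (2 * B * (2 - α * h)) * ((1 - γ) * (1 + r * γ) / ((1 + γ) * (1 - r * γ))) := by
    rw [show 1 - r ^ 2 = α * h * (2 - α * h) by ring]
    field_simp
  rw [integral_const_mul, integral_const_mul, hmom, ← hconst]
  have hscaled :=
    mul_le_mul_of_nonneg_left hnoise (by positivity : 0 ≤ 1 / 2 * h * (α ^ 2 * (c / B)))
  linarith

/-- For SGD with exponential moving average on a scalar noisy quadratic
(`θ(t+1) = θ(t) - α(hθ(t) + √(c/B)ε(t))`, `θ̃(t+1) = γθ̃(t) + (1-γ)θ(t+1)`, `θ̃(0) = θ(0)`),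
with `0 < αh < 2`, `0 ≤ γ < 1`, `γ ≠ 1-αh`, the expected risk of the averaged iterate
satisfies, with `r₁ = 1-αh` and `r₂ = γ`:
`E[ℓ(θ̃(t))] ≤ ((r₁^(t+1) - r₂^(t+1) - γ(1-αh)(r₁^t - r₂^t))/(r₁-r₂))² E[ℓ(θ(0))]
  + (αc/(2B(2-αh)))·((1-γ)(1+(1-αh)γ))/((1+γ)(1-(1-αh)γ))`. -/
theorem stmt12 {Ω : Type*} [MeasurableSpace Ω] {μ : Measure Ω} [IsProbabilityMeasure μ]
    (α h c B γ : ℝ) (hα : 0 < α) (hh : 0 < h) (hc : 0 < c) (hB : 0 < B)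
    (h0 : 0 < α * h) (h2 : α * h < 2) (hγ0 : 0 ≤ γ) (hγ1 : γ < 1)
    (hγne : γ ≠ 1 - α * h)
    (θ θavg ε : ℕ → Ω → ℝ)
    (hθmeas : ∀ t, Measurable (θ t)) (havgmeas : ∀ t, Measurable (θavg t))
    (hεmeas : ∀ t, Measurable (ε t))
    (hθL2 : ∀ t, MemLp (θ t) 2 μ) (havgL2 : ∀ t, MemLp (θavg t) 2 μ)
    (hεL2 : ∀ t, MemLp (ε t) 2 μ)
    (hmean : ∀ t, ∫ ω, ε t ω ∂μ = 0) (hvar : ∀ t, variance (ε t) μ = 1)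
    (hindep : ∀ t, IndepFun (fun ω => (θ t ω, θavg t ω)) (ε t) μ)
    (havg0 : ∀ ω, θavg 0 ω = θ 0 ω)
    (hrecθ : ∀ t ω, θ (t + 1) ω = θ t ω - α * (h * θ t ω + Real.sqrt (c / B) * ε t ω))
    (hrecavg : ∀ t ω, θavg (t + 1) ω = γ * θavg t ω + (1 - γ) * θ (t + 1) ω)
    (t : ℕ) :
    ∫ ω, (1 / 2) * h * (θavg t ω) ^ 2 ∂μ
      ≤ (((1 - α * h) ^ (t + 1) - γ ^ (t + 1)
            - γ * (1 - α * h) * ((1 - α * h) ^ t - γ ^ t)) / ((1 - α * h) - γ)) ^ 2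
          * ∫ ω, (1 / 2) * h * (θ 0 ω) ^ 2 ∂μ
        + (α * c / (2 * B * (2 - α * h)))
          * ((1 - γ) * (1 + (1 - α * h) * γ) / ((1 + γ) * (1 - (1 - α * h) * γ))) :=
  stmt12_general α h c B γ hh hc hB h0 h2 hγ0 hγ1 hγne θ θavg ε hθL2 havgL2 hεL2 hmean hvar hindep
    havg0 hrecθ hrecavg t
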